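/- In the execution of Algorithm lineon on any request sequence R, for every node v and every time t, at most one interval I ∈ 𝓘 with v ∈ NL(I) satisfies ⟨I,t⟩ ∈ COMMIT, and at most one interval I ∈ 𝓘 with v ∈ NR(I) satisfies ⟨I,t⟩ ∈ COMMIT. -/

import Mathlib

open Finset

/-! ## The time-line grid of a line network -/

/-- Grid edges of the time-line graph of the line network:
`h v t` is the undirected horizontal edge `{(v,t),(v+1,t)}`,
`a v t` is the arc `((v,t),(v,t+1))` directed forward in time. -/
inductive GEdge : Type
  | h (v t : ℕ) : GEdge
  | a (v t : ℕ) : GEdge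
deriving DecidableEq

/-- Distance between two nodes of the line network. -/
def natdist (a b : ℕ) : ℕ := max a b - min a b

/-- The (replica) endpoints of a grid edge. -/
def eVerts : GEdge → Finset (ℕ × ℕ)
  | .h v t => {(v, t), (v + 1, t)}
  | .a v t => {(v, t), (v, t + 1)}

/-- The replicas that are endpoints of edges of `F`. -/
def verts (F : Finset GEdge) : Finset (ℕ × ℕ) := F.biUnion eVerts

/-- The edge lies inside the grid of the line network `L(n)` (nodes `1,…,n`). -/
def eInGrid (n : ℕ) : GEdge → Prop
  | .h v _ => 1 ≤ v ∧ v + 1 ≤ n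
  | .a v _ => 1 ≤ v ∧ v ≤ n

/-- The distance `d((u,s),(v,t)) = (t-s) + |v-u|` if `s ≤ t`, and `∞` otherwise. -/
def gdist (p q : ℕ × ℕ) : WithTop ℕ :=
  if p.2 ≤ q.2 then ((q.2 - p.2 + natdist p.1 q.1 : ℕ) : WithTop ℕ) else ⊤

/-- One step of a path in a solution: horizontal edges may be traversed in both
directions, arcs only forward in time. -/
inductive GStep (F : Finset GEdge) : ℕ × ℕ → ℕ × ℕ → Prop
  | right {v t : ℕ} : GEdge.h v t ∈ F → GStep F (v, t) (v + 1, t)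
  | left {v t : ℕ} : GEdge.h v t ∈ F → GStep F (v + 1, t) (v, t)
  | up {v t : ℕ} : GEdge.a v t ∈ F → GStep F (v, t) (v, t + 1)

/-- `q` is reachable from `p` in the edge set `F`. -/
def Reaches (F : Finset GEdge) (p q : ℕ × ℕ) : Prop := Relation.ReflTransGen (GStep F) p q

/-- A feasible MCD solution: a set of grid edges spanning all requests from the
origin replica `(r0, 0)`. -/
def Feasible (n r0 : ℕ) (R : List (ℕ × ℕ)) (F : Finset GEdge) : Prop :=
  (∀ e ∈ F, eInGrid n e) ∧ ∀ r ∈ R, Reaches F (r0, 0) r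

/-- `|OPT|`, the cost of a minimum-cost feasible solution. -/
noncomputable def optCost (n r0 : ℕ) (R : List (ℕ × ℕ)) : ℕ :=
  sInf {c : ℕ | ∃ F : Finset GEdge, Feasible n r0 R F ∧ F.card = c}

/-- A valid MCD instance on `L(n)`: the origin and all requested nodes are in
`{1,…,n}` and the request times are nondecreasing. -/
def ValidInstance (n r0 : ℕ) (R : List (ℕ × ℕ)) : Prop :=
  1 ≤ r0 ∧ r0 ≤ n ∧ (∀ r ∈ R, 1 ≤ r.1 ∧ r.1 ≤ n) ∧ List.Chain' (· ≤ ·) (R.map Prod.snd)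

/-- The time `t_N` of the last request. -/
def lastT (R : List (ℕ × ℕ)) : ℕ := (R.map Prod.snd).foldr max 0

/-! ## The offline algorithm Triangle of Charikar, Halperin and Motwani -/

/-- The `i`-th request (junk value `(0,0)` out of range). -/
def req (R : List (ℕ × ℕ)) (i : ℕ) : ℕ × ℕ := R.getD i (0, 0)

/-- The radius `ρ^T_i = d(q_i, r_i)` of the `i`-th request, where `q_i = serve i`
is its serving replica. -/
def triRho (R : List (ℕ × ℕ)) (serve : ℕ → ℕ × ℕ) (i : ℕ) : ℕ :=
  ((req R i).2 - (serve i).2) + natdist (serve i).1 (req R i).1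

/-- `Base(i)`: the replicas `(v, t_i)` with `|v - v_i| ≤ ρ^T_i`. -/
def triBase (n : ℕ) (R : List (ℕ × ℕ)) (serve : ℕ → ℕ × ℕ) (i : ℕ) : Finset (ℕ × ℕ) :=
  ((Finset.Icc 1 n).filter fun v => natdist v (req R i).1 ≤ triRho R serve i).image
    fun v => (v, (req R i).2)

/-- `Base_H(i)`: the horizontal edges joining consecutive replicas of `Base(i)`. -/
def triBaseH (n : ℕ) (R : List (ℕ × ℕ)) (serve : ℕ → ℕ × ℕ) (i : ℕ) : Finset GEdge :=
  ((Finset.Icc 1 n).filter fun v =>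
      v + 1 ≤ n ∧ natdist v (req R i).1 ≤ triRho R serve i ∧
        natdist (v + 1) (req R i).1 ≤ triRho R serve i).image
    fun v => GEdge.h v (req R i).2

/-- The arcs of the vertical path from the serving replica `(u_i, s_i)` to `(u_i, t_i)`
added at step (T3). -/
def triAddA (R : List (ℕ × ℕ)) (serve : ℕ → ℕ × ℕ) (i : ℕ) : Finset GEdge :=
  (Finset.Ico (serve i).2 (req R i).2).image fun τ => GEdge.a (serve i).1 τ

/-- Triangle's solution after handling the first `i` requests. -/
def triSol (R : List (ℕ × ℕ)) (serve : ℕ → ℕ × ℕ) (addH : ℕ → Finset GEdge)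
    (i : ℕ) : Finset GEdge :=
  (Finset.range i).biUnion fun j => triAddA R serve j ∪ addH j

/-- The replicas of Triangle's solution after handling the first `i` requests
(initially only the origin replica `(r0,0)`). -/
def triReps (r0 : ℕ) (R : List (ℕ × ℕ)) (serve : ℕ → ℕ × ℕ) (addH : ℕ → Finset GEdge)
    (i : ℕ) : Finset (ℕ × ℕ) :=
  insert (r0, 0) (verts (triSol R serve addH i))

/-- An execution of Algorithm Triangle on the instance `(n, r0, R)`:
`serve i` is the serving replica `q_i = (u_i, s_i)` of request `r_i` (step (T1)),
chosen in the current solution at minimum distance from `r_i`;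
`addH i` is the set of horizontal edges added at step (T4), namely all of
`Base_H(i)` except possibly one edge (the one closing a cycle). -/
structure TriangleExec (n r0 : ℕ) (R : List (ℕ × ℕ)) where
  serve : ℕ → ℕ × ℕ
  addH : ℕ → Finset GEdge
  serve_mem : ∀ i < R.length, serve i ∈ triReps r0 R serve addH i
  serve_time : ∀ i < R.length, (serve i).2 ≤ (req R i).2
  serve_min : ∀ i < R.length, ∀ q ∈ triReps r0 R serve addH i,
      gdist (serve i) (req R i) ≤ gdist q (req R i)
  addH_spec : ∀ i < R.length, ∃ E : Finset GEdge,
      E.card ≤ 1 ∧ addH i = triBaseH n R serve i \ E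
  base_conn : ∀ i < R.length, ∀ p ∈ triBase n R serve i,
      Reaches (triSol R serve addH (i + 1)) (r0, 0) p
  addH_tail : ∀ i, R.length ≤ i → addH i = ∅

/-- `H^T`: the horizontal edges of Triangle's final solution. -/
def triHT (R : List (ℕ × ℕ)) (addH : ℕ → Finset GEdge) : Finset GEdge :=
  (Finset.range R.length).biUnion addH

/-- `A^T`: the arcs of Triangle's final solution. -/
def triAT (R : List (ℕ × ℕ)) (serve : ℕ → ℕ × ℕ) : Finset GEdge :=
  (Finset.range R.length).biUnion (triAddA R serve)

/-- `Base = ∪ᵢ Base(i)`: all base replicas. -/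
def triBaseAll (n : ℕ) (R : List (ℕ × ℕ)) (serve : ℕ → ℕ × ℕ) : Finset (ℕ × ℕ) :=
  (Finset.range R.length).biUnion (triBase n R serve)

/-! ## Algorithm lineon -/

/-- An interval of the hierarchical partition, encoded as `(level, index)`:
`(l, j)` denotes `I^l_j = {Δ(j-1)·2^l + 1, …, Δ·j·2^l}`. -/
abbrev Ivl := ℕ × ℕ

/-- The nodes of the interval `I = (l, j)`. -/
def ivlNodes (Δ : ℕ) (I : Ivl) : Finset ℕ :=
  Finset.Icc (Δ * (I.2 - 1) * 2 ^ I.1 + 1) (Δ * I.2 * 2 ^ I.1)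

/-- `I = (l, j)` is a genuine interval of the partition of `{1,…,n}`,
where `n = Δ · 2^k`: its level is at most `log₂ m = k` and
`1 ≤ j ≤ m / 2^l = 2^(k-l)`. -/
def validIvl (Δ k : ℕ) (I : Ivl) : Prop :=
  I.1 ≤ k ∧ 1 ≤ I.2 ∧ I.2 ≤ 2 ^ (k - I.1)

/-- The nodes of the neighborhood `N(I) = NL(I) ∪ I ∪ NR(I)` of interval `I`. -/
def nbhdNodes (n Δ : ℕ) (I : Ivl) : Finset ℕ :=
  Finset.Icc (Δ * (I.2 - 2) * 2 ^ I.1 + 1) (min n (Δ * (I.2 + 1) * 2 ^ I.1))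

/-- The nodes having a base replica at time `t` (`Base[t]`, as nodes). -/
def baseNodesAt (n : ℕ) (R : List (ℕ × ℕ)) (serve : ℕ → ℕ × ℕ) (t : ℕ) : Finset ℕ :=
  ((triBaseAll n R serve).filter fun p => p.2 = t).image Prod.fst

/-- `I` is active at time `t`: `Base ∩ I[t - 2^{l(I)}, t] ≠ ∅`. -/
def activeAt (n Δ : ℕ) (R : List (ℕ × ℕ)) (serve : ℕ → ℕ × ℕ) (I : Ivl) (t : ℕ) : Prop :=
  ∃ p ∈ triBaseAll n R serve, p.1 ∈ ivlNodes Δ I ∧ p.2 ≤ t ∧ t ≤ p.2 + 2 ^ I.1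

/-- `I` is stay-active at time `t`: `Base ∩ I[t - 2^{l(I)} + 1, t] ≠ ∅`. -/
def stayActiveAt (n Δ : ℕ) (R : List (ℕ × ℕ)) (serve : ℕ → ℕ × ℕ) (I : Ivl) (t : ℕ) : Prop :=
  ∃ p ∈ triBaseAll n R serve, p.1 ∈ ivlNodes Δ I ∧ p.2 ≤ t ∧ t < p.2 + 2 ^ I.1

/-- `C_t`: the nodes storing a copy at time `t`.  `C_0 = {r0}`, and `C_{t+1}`
consists of the origin together with the nodes selected (by `sel`) for the
commitments made at time `t` (listed, in processing order, in `commitList t`). -/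
def lineC (r0 : ℕ) (commitList : ℕ → List Ivl) (sel : ℕ → Ivl → ℕ) : ℕ → Finset ℕ
  | 0 => {r0}
  | t + 1 => insert r0 ((commitList t).map (sel t)).toFinset

/-- The nodes to which the delivery phase for request `r_j` delivers a copy:
the horizontal path from `q^on_j` to `r_j` together with the nodes of `Base(j)`. -/
def servedNodes (n : ℕ) (R : List (ℕ × ℕ)) (serve : ℕ → ℕ × ℕ) (qon : ℕ → ℕ)
    (j : ℕ) : Finset ℕ :=
  Finset.Icc (min (qon j) (req R j).1) (max (qon j) (req R j).1) ∪
    (triBase n R serve j).image Prod.fst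

/-- The nodes whose time-`t_i` replica is in lineon's solution when request `r_i`
arrives: the caches `C_{t_i}` together with everything delivered for earlier
requests of the same time. -/
def availNodes (n r0 : ℕ) (R : List (ℕ × ℕ)) (serve : ℕ → ℕ × ℕ)
    (commitList : ℕ → List Ivl) (sel : ℕ → Ivl → ℕ) (qon : ℕ → ℕ) (i : ℕ) : Finset ℕ :=
  lineC r0 commitList sel (req R i).2 ∪
    (Finset.range i).biUnion fun j =>
      if (req R j).2 = (req R i).2 then servedNodes n R serve qon j else ∅

/-- An execution of Algorithm lineon with parameter `Δ` (where `n = Δ · 2^k`) on the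
instance `(n, r0, R)`.  It simulates Triangle (`tri`); `commitList t` is the list of
intervals committing at time `t`, in the order processed by the storage phase
(levels in increasing order); `sel t I` is the node selected for the commitment
`⟨I,t⟩` in step (S1.2); `qon i` is the node of the serving replica `q^on_i` of
request `r_i` chosen in the delivery phase (step (D1)). -/
structure LineonExec (n Δ k r0 : ℕ) (R : List (ℕ × ℕ)) where
  tri : TriangleExec n r0 R
  hn : n = Δ * 2 ^ k
  commitList : ℕ → List Ivl
  sel : ℕ → Ivl → ℕ
  qon : ℕ → ℕ
  commit_valid : ∀ t, ∀ I ∈ commitList t, validIvl Δ k I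
  commit_nodup : ∀ t, (commitList t).Nodup
  commit_sorted : ∀ t, ((commitList t).map Prod.fst).Pairwise (· ≤ ·)
  commit_stay : ∀ t, ∀ I ∈ commitList t, stayActiveAt n Δ R tri.serve I t
  commit_fresh : ∀ t l₁ I l₂, commitList t = l₁ ++ I :: l₂ →
      ∀ v ∈ nbhdNodes n Δ I, v ≠ r0 ∧ v ∉ l₁.map (sel t)
  commit_tail : ∀ t, lastT R < t → commitList t = []
  sel_nbhd : ∀ t, ∀ I ∈ commitList t, sel t I ∈ nbhdNodes n Δ I
  sel_src : ∀ t, ∀ I ∈ commitList t,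
      sel t I ∈ baseNodesAt n R tri.serve t ∨ sel t I ∈ lineC r0 commitList sel t
  loop_done : ∀ t ≤ lastT R, ∀ I, validIvl Δ k I → stayActiveAt n Δ R tri.serve I t →
      ∃ v ∈ nbhdNodes n Δ I, v ∈ lineC r0 commitList sel (t + 1)
  qon_mem : ∀ i < R.length, qon i ∈ availNodes n r0 R tri.serve commitList sel qon i
  qon_min : ∀ i < R.length, ∀ w ∈ availNodes n r0 R tri.serve commitList sel qon i,
      natdist (qon i) (req R i).1 ≤ natdist w (req R i).1

/-- The online radius `ρ^on_i = d(q^on_i, r_i)`. -/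
def lineRon (R : List (ℕ × ℕ)) (qon : ℕ → ℕ) (i : ℕ) : ℕ := natdist (qon i) (req R i).1

/-- `H^on`: the horizontal edges of lineon's final solution. -/
def lineHon (n : ℕ) (R : List (ℕ × ℕ)) (serve : ℕ → ℕ × ℕ) (qon : ℕ → ℕ) : Finset GEdge :=
  (Finset.range R.length).biUnion fun i =>
    (Finset.Ico (min (qon i) (req R i).1) (max (qon i) (req R i).1)).image
        (fun v => GEdge.h v (req R i).2) ∪
      triBaseH n R serve i

/-- `A^on`: the arcs of lineon's final solution, i.e. the arcs `((v,t),(v,t+1))`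
with `(v,t+1) ∈ C_{t+1}`. -/
def lineAon (r0 : ℕ) (R : List (ℕ × ℕ)) (commitList : ℕ → List Ivl)
    (sel : ℕ → Ivl → ℕ) : Finset GEdge :=
  (Finset.range (lastT R)).biUnion fun t =>
    (lineC r0 commitList sel (t + 1)).image fun v => GEdge.a v t

/-- `COMMIT`, as a finite set of pairs `⟨I, t⟩`. -/
def commitSet (R : List (ℕ × ℕ)) (commitList : ℕ → List Ivl) : Finset (Ivl × ℕ) :=
  (Finset.range (lastT R + 1)).biUnion fun t =>
    (commitList t).toFinset.image fun I => (I, t)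

/-- `v` belongs to the left neighbor `NL(I)` of interval `I`. -/
def inNL (Δ : ℕ) (v : ℕ) (I : Ivl) : Prop :=
  2 ≤ I.2 ∧ v ∈ ivlNodes Δ (I.1, I.2 - 1)

/-- `v` belongs to the right neighbor `NR(I)` of interval `I`. -/
def inNR (Δ k : ℕ) (v : ℕ) (I : Ivl) : Prop :=
  I.2 + 1 ≤ 2 ^ (k - I.1) ∧ v ∈ ivlNodes Δ (I.1, I.2 + 1)

/-- Nesting of dyadic intervals: a lower-level interval containing `v` is, in
terms of endpoint bounds, contained in the higher-level interval containing `v`. -/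
private lemma dyadic_nest {Δ l l' a a' v : ℕ} (hl : l ≤ l')
    (hv : v ∈ ivlNodes Δ (l, a)) (hv' : v ∈ ivlNodes Δ (l', a')) :
    Δ * (a' - 1) * 2 ^ l' ≤ Δ * (a - 1) * 2 ^ l ∧ Δ * a * 2 ^ l ≤ Δ * a' * 2 ^ l' := by
  simp only [ivlNodes, Finset.mem_Icc] at hv hv'
  obtain ⟨c, hc⟩ : ∃ c, 2 ^ l' = 2 ^ l * c := ⟨2 ^ (l' - l), by rw [← pow_add]; congr 1; omega⟩
  have e1 : Δ * (a - 1) * 2 ^ l = Δ * 2 ^ l * (a - 1) := by ring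
  have e2 : Δ * a' * 2 ^ l' = Δ * 2 ^ l * (a' * c) := by rw [hc]; ring
  have e3 : Δ * a * 2 ^ l = Δ * 2 ^ l * a := by ring
  have e4 : Δ * (a' - 1) * 2 ^ l' = Δ * 2 ^ l * ((a' - 1) * c) := by rw [hc]; ring
  constructor
  · have h : Δ * 2 ^ l * ((a' - 1) * c) < Δ * 2 ^ l * a := by rw [← e4, ← e3]; omega
    have h2 : (a' - 1) * c < a := lt_of_mul_lt_mul_left h (Nat.zero_le _)
    rw [e4, e1]
    exact Nat.mul_le_mul_left _ (by omega)
  · have h : Δ * 2 ^ l * (a - 1) < Δ * 2 ^ l * (a' * c) := by rw [← e1, ← e2]; omega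
    have h2 : a - 1 < a' * c := lt_of_mul_lt_mul_left h (Nat.zero_le _)
    rw [e3, e2]
    exact Nat.mul_le_mul_left _ (by omega)

/-- Two same-level dyadic intervals containing the same node coincide. -/
private lemma same_level_ivl {Δ l a a' v : ℕ} (hΔ : 1 ≤ Δ)
    (hv : v ∈ ivlNodes Δ (l, a)) (hv' : v ∈ ivlNodes Δ (l, a')) : a = a' := by
  have g1 := (dyadic_nest le_rfl hv hv').2
  have g2 := (dyadic_nest le_rfl hv' hv).2
  have heq : a * (Δ * 2 ^ l) = a' * (Δ * 2 ^ l) := by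
    have e : ∀ x : ℕ, Δ * x * 2 ^ l = x * (Δ * 2 ^ l) := fun x => by ring
    rw [e, e] at g1 g2
    omega
  exact Nat.eq_of_mul_eq_mul_right (Nat.mul_pos hΔ (pow_pos two_pos l)) heq

private lemma two_pow_le {Δ l l' : ℕ} (hlt : l < l') : 2 * (Δ * 2 ^ l) ≤ Δ * 2 ^ l' := by
  have h : (2 : ℕ) ^ (l + 1) ≤ 2 ^ l' := Nat.pow_le_pow_right (by norm_num) hlt
  calc 2 * (Δ * 2 ^ l) = Δ * 2 ^ (l + 1) := by ring
    _ ≤ Δ * 2 ^ l' := Nat.mul_le_mul_left _ h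

/-- If `v ∈ NL(I)` and `v ∈ NL(I')` with `l(I) < l(I')`, then `N(I) ⊆ N(I')`. -/
private lemma nbhd_subset_NL {n Δ v : ℕ} {I I' : Ivl} (hlt : I.1 < I'.1)
    (h : inNL Δ v I) (h' : inNL Δ v I') : nbhdNodes n Δ I ⊆ nbhdNodes n Δ I' := by
  obtain ⟨hj, hv⟩ := h
  obtain ⟨hj', hv'⟩ := h'
  obtain ⟨g1, g2⟩ := dyadic_nest (le_of_lt hlt) hv hv'
  have hs : ∀ j : ℕ, j - 1 - 1 = j - 2 := fun j => by omega
  rw [hs, hs] at g1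
  have hright : Δ * (I.2 + 1) * 2 ^ I.1 ≤ Δ * (I'.2 + 1) * 2 ^ I'.1 := by
    have e : Δ * (I.2 + 1) * 2 ^ I.1 = Δ * (I.2 - 1) * 2 ^ I.1 + 2 * (Δ * 2 ^ I.1) := by
      rw [show I.2 + 1 = I.2 - 1 + 2 by omega]; ring
    have e' : Δ * (I'.2 - 1) * 2 ^ I'.1 + (Δ * 2 ^ I'.1) = Δ * I'.2 * 2 ^ I'.1 := by
      rw [show Δ * (I'.2 - 1) * 2 ^ I'.1 + Δ * 2 ^ I'.1 = Δ * (I'.2 - 1 + 1) * 2 ^ I'.1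
        by ring, show I'.2 - 1 + 1 = I'.2 by omega]
    have hQ := two_pow_le (Δ := Δ) hlt
    calc Δ * (I.2 + 1) * 2 ^ I.1
        = Δ * (I.2 - 1) * 2 ^ I.1 + 2 * (Δ * 2 ^ I.1) := e
      _ ≤ Δ * (I'.2 - 1) * 2 ^ I'.1 + Δ * 2 ^ I'.1 := by omega
      _ = Δ * I'.2 * 2 ^ I'.1 := e'
      _ ≤ Δ * (I'.2 + 1) * 2 ^ I'.1 :=
          Nat.mul_le_mul (Nat.mul_le_mul_left _ (by omega)) le_rfl
  intro x hx
  simp only [nbhdNodes, Finset.mem_Icc, le_min_iff, min_le_iff] at hx ⊢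
  omega

/-- If `v ∈ NR(I)` and `v ∈ NR(I')` with `l(I) < l(I')`, then `N(I) ⊆ N(I')`. -/
private lemma nbhd_subset_NR {n Δ k v : ℕ} {I I' : Ivl} (hlt : I.1 < I'.1)
    (h : inNR Δ k v I) (h' : inNR Δ k v I') : nbhdNodes n Δ I ⊆ nbhdNodes n Δ I' := by
  obtain ⟨hj, hv⟩ := h
  obtain ⟨hj', hv'⟩ := h'
  obtain ⟨g1, g2⟩ := dyadic_nest (le_of_lt hlt) hv hv'
  simp only [Nat.add_sub_cancel] at g1
  have hleft : Δ * (I'.2 - 2) * 2 ^ I'.1 ≤ Δ * (I.2 - 2) * 2 ^ I.1 := by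
    have eL : ∀ (a x : ℕ), Δ * (a - 2) * 2 ^ x = a * (Δ * 2 ^ x) - 2 * (Δ * 2 ^ x) :=
      fun a x => by rw [show Δ * (a - 2) * 2 ^ x = (a - 2) * (Δ * 2 ^ x) by ring, Nat.sub_mul]
    have e : ∀ (a x : ℕ), Δ * a * 2 ^ x = a * (Δ * 2 ^ x) := fun a x => by ring
    rw [e, e] at g1
    have hQ := two_pow_le (Δ := Δ) hlt
    rw [eL, eL]
    omega
  intro x hx
  simp only [nbhdNodes, Finset.mem_Icc, le_min_iff, min_le_iff] at hx ⊢
  omega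

/-- Membership in `COMMIT` gives membership in the commit list of that time. -/
private lemma mem_commitList {R : List (ℕ × ℕ)} {cl : ℕ → List Ivl} {I : Ivl} {t : ℕ}
    (h : (I, t) ∈ commitSet R cl) : I ∈ cl t := by
  simp only [commitSet, Finset.mem_biUnion, Finset.mem_image, List.mem_toFinset,
    Finset.mem_range, Prod.mk.injEq] at h
  obtain ⟨t', _, J, hJ, rfl, rfl⟩ := h
  exact hJ

/-- If `I` and `I'` both commit at time `t`, `l(I) < l(I')` and `N(I) ⊆ N(I')`,
we get a contradiction with the freshness condition of the storage phase. -/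
private lemma commit_mono_false {n Δ k r0 : ℕ} {R : List (ℕ × ℕ)}
    (e : LineonExec n Δ k r0 R) {I I' : Ivl} {t : ℕ}
    (hI : I ∈ e.commitList t) (hI' : I' ∈ e.commitList t) (hlt : I.1 < I'.1)
    (hsub : nbhdNodes n Δ I ⊆ nbhdNodes n Δ I') : False := by
  obtain ⟨l₁, l₂, hsplit⟩ := List.append_of_mem hI'
  have hmem : I ∈ l₁ := by
    rw [hsplit] at hI
    rcases List.mem_append.mp hI with h | h
    · exact h
    · rcases List.mem_cons.mp h with rfl | h
      · exact absurd hlt (lt_irrefl _)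
      · exfalso
        have hs := e.commit_sorted t
        rw [hsplit, List.map_append, List.map_cons] at hs
        have h1 := (List.pairwise_append.mp hs).2.1
        have h2 := (List.pairwise_cons.mp h1).1 I.1 (List.mem_map_of_mem h)
        omega
  have hfresh := e.commit_fresh t l₁ I' l₂ hsplit (e.sel t I) (hsub (e.sel_nbhd t I hI))
  exact hfresh.2 (List.mem_map_of_mem hmem)

/-- For every node `v` and every time `t`, at most one interval
`I` with `v ∈ NL(I)` commits at `t`, and at most one interval `I` with
`v ∈ NR(I)` commits at `t`. -/
theorem lineon_one_neighbor_interval_commits (n Δ k r0 : ℕ) (R : List (ℕ × ℕ))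
    (hV : ValidInstance n r0 R) (hΔ : 1 ≤ Δ) (e : LineonExec n Δ k r0 R)
    (v t : ℕ) :
    (∀ I I' : Ivl, (I, t) ∈ commitSet R e.commitList →
        (I', t) ∈ commitSet R e.commitList → inNL Δ v I → inNL Δ v I' → I = I') ∧
      (∀ I I' : Ivl, (I, t) ∈ commitSet R e.commitList →
        (I', t) ∈ commitSet R e.commitList → inNR Δ k v I → inNR Δ k v I' → I = I') := by
  constructor
  · intro I I' hIc hI'c h h'
    have hI := mem_commitList hIc
    have hI' := mem_commitList hI'c
    rcases lt_trichotomy I.1 I'.1 with hlt | heq | hgt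
    · exact (commit_mono_false e hI hI' hlt (nbhd_subset_NL hlt h h')).elim
    · have h2 := same_level_ivl hΔ h.2 (heq ▸ h'.2)
      have h3 := h.1
      have h4 := h'.1
      exact Prod.ext heq (by omega)
    · exact (commit_mono_false e hI' hI hgt (nbhd_subset_NL hgt h' h)).elim
  · intro I I' hIc hI'c h h'
    have hI := mem_commitList hIc
    have hI' := mem_commitList hI'c
    rcases lt_trichotomy I.1 I'.1 with hlt | heq | hgt
    · exact (commit_mono_false e hI hI' hlt (nbhd_subset_NR hlt h h')).elim
    · have h2 := same_level_ivl hΔ h.2 (heq ▸ h'.2)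
      exact Prod.ext heq (by omega)
    · exact (commit_mono_false e hI' hI hgt (nbhd_subset_NR hgt h' h)).elim
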